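/- The first return time of an ergodic measure-preserving system (X,T,μ) to a positive-measure set Y is aperiodic if and only if (X,T,μ) is weakly mixing. -/

import Mathlib

/-!
An eigenfunction `g ∘ T = e^{it} g` of an ergodic `T` has constant modulus, so it does not vanish
on `Y` and `g ∘ T^τ = e^{itτ} g` there; aperiodicity forces `t = 0`, and ergodicity makes `g`
constant. Conversely, a solution `f` of `f ∘ T^τ = e^{itτ} f` on `Y` extends to
`g(x) = e^{-it h(x)} f(T^{h(x)} x)`, where `h` is the first hitting time of `Y`, which is
finite a.e. by ergodicity. This `g` is an eigenfunction of `T` with eigenvalue `e^{it}`, so weak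
mixing gives `t = 0` and `g`, hence `f`, constant.
-/

open MeasureTheory Filter
open scoped ENNReal Topology

section HitTime

variable {X : Type*} {T : X → X} {Y : Set X} {x : X}

noncomputable def hitTime (T : X → X) (Y : Set X) (x : X) : ℕ :=
  sInf {k | T^[k] x ∈ Y}

noncomputable def returnTime (T : X → X) (Y : Set X) (x : X) : ℕ :=
  sInf {n | 1 ≤ n ∧ T^[n] x ∈ Y}

lemma iterate_hitTime_mem (h : ∃ k, T^[k] x ∈ Y) : T^[hitTime T Y x] x ∈ Y :=
  Nat.sInf_mem h

lemma hitTime_eq_zero (hx : x ∈ Y) : hitTime T Y x = 0 :=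
  Nat.sInf_eq_zero.2 (Or.inl hx)

lemma hitTime_apply_add_one (hx : x ∉ Y) (h : ∃ k, T^[k] x ∈ Y) :
    hitTime T Y (T x) + 1 = hitTime T Y x := by
  have hpos : 1 ≤ hitTime T Y x :=
    Nat.one_le_iff_ne_zero.2 fun h0 ↦ hx (by simpa [h0] using iterate_hitTime_mem h)
  have h := Nat.sInf_add hpos
  simp only [Function.iterate_succ_apply] at h
  exact h

lemma returnTime_eq_hitTime_add_one (h : ∃ k, T^[k] (T x) ∈ Y) :
    returnTime T Y x = hitTime T Y (T x) + 1 := by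
  obtain ⟨k, hk⟩ := h
  have hne : {n | 1 ≤ n ∧ T^[n] x ∈ Y}.Nonempty :=
    ⟨k + 1, Nat.le_add_left 1 k, by rwa [Function.iterate_succ_apply]⟩
  have hpos : 1 ≤ returnTime T Y x := (Nat.sInf_mem hne).1
  have h := Nat.sInf_add hpos
  simp only [Function.iterate_succ_apply, le_add_iff_nonneg_left, zero_le, true_and] at h
  exact h.symm

lemma iterate_hitTime_apply (hx : x ∉ Y) (h : ∃ k, T^[k] x ∈ Y) :
    T^[hitTime T Y (T x)] (T x) = T^[hitTime T Y x] x := by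
  rw [← hitTime_apply_add_one hx h, Function.iterate_succ_apply]

lemma measurable_sInf_setOf_mem [MeasurableSpace X] {s : ℕ → Set X}
    (hs : ∀ k, MeasurableSet (s k)) : Measurable fun x ↦ sInf {k | x ∈ s k} := by
  classical
  -- padding with the complement of `⋃ k, s k` changes nothing but makes the sets nonempty
  let t k := s k ∪ (⋃ j, s j)ᶜ
  have ht : ∀ x, ∃ k, x ∈ t k := fun x ↦ by
    by_cases hx : x ∈ ⋃ j, s j
    · obtain ⟨k, hk⟩ := Set.mem_iUnion.1 hx
      exact ⟨k, Or.inl hk⟩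
    · exact ⟨0, Or.inr hx⟩
  have heq : (fun x ↦ sInf {k | x ∈ s k}) = fun x ↦ Nat.find (ht x) := by
    funext x
    convert Nat.sInf_def (s := {k | x ∈ t k}) (ht x) using 1
    · by_cases hx : x ∈ ⋃ j, s j
      · obtain ⟨i, hi⟩ := Set.mem_iUnion.1 hx
        have hall : ¬ ∀ j, x ∉ s j := fun h ↦ h i hi
        simp [t, hall]
      · simp_all [t]
    · congr
  rw [heq]
  exact measurable_find ht fun k ↦ (hs k).union (MeasurableSet.iUnion hs).compl

lemma measurable_hitTime [MeasurableSpace X] (hT : Measurable T) (hY : MeasurableSet Y) :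
    Measurable (hitTime T Y) :=
  measurable_sInf_setOf_mem fun k ↦ hT.iterate k hY

end HitTime

lemma Ergodic.ae_exists_iterate_mem {X : Type*} [MeasurableSpace X] {μ : Measure X}
    [IsFiniteMeasure μ] {T : X → X} {Y : Set X} (hT : Ergodic T μ) (hY : MeasurableSet Y)
    (hY0 : μ Y ≠ 0) : ∀ᵐ x ∂μ, ∃ k, T^[k] x ∈ Y := by
  set A := ⋃ k, T^[k] ⁻¹' Y
  have hA : MeasurableSet A := .iUnion fun k ↦ hT.measurable.iterate k hY
  have hTA : T ⁻¹' A ⊆ A := fun x hx ↦ by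
    obtain ⟨k, hk⟩ := Set.mem_iUnion.1 hx
    exact Set.mem_iUnion.2 ⟨k + 1, by rwa [Set.mem_preimage, Function.iterate_succ_apply]⟩
  have hYA : Y ⊆ A := fun y hy ↦ Set.mem_iUnion.2 ⟨0, hy⟩
  rcases hT.ae_empty_or_univ_of_preimage_ae_le hA.nullMeasurableSet hTA.eventuallyLE with h | h
  · exact absurd (measure_mono_null hYA (ae_eq_empty.1 h)) hY0
  · filter_upwards [h.mem_iff] with x hx
    exact Set.mem_iUnion.1 (hx.2 trivial)

section TowerLift

variable {X 𝕜 : Type*} [Field 𝕜] {T : X → X} {Y : Set X} {c : 𝕜} {f : X → 𝕜} {x : X}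

noncomputable def towerLift (T : X → X) (Y : Set X) (c : 𝕜) (f : X → 𝕜) (x : X) : 𝕜 :=
  (c ^ hitTime T Y x)⁻¹ * f (T^[hitTime T Y x] x)

lemma towerLift_of_mem (hx : x ∈ Y) : towerLift T Y c f x = f x := by
  simp [towerLift, hitTime_eq_zero hx]

lemma towerLift_apply_map (hc : c ≠ 0) (hx : ∃ k, T^[k] (T x) ∈ Y)
    (hf : x ∈ Y → f (T^[returnTime T Y x] x) = c ^ returnTime T Y x * f x) :
    towerLift T Y c f (T x) = c * towerLift T Y c f x := by
  by_cases hxY : x ∈ Y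
  · have hr := returnTime_eq_hitTime_add_one hx
    rw [towerLift_of_mem hxY, towerLift, ← Function.iterate_succ_apply,
      show (hitTime T Y (T x)).succ = returnTime T Y x from hr.symm, hf hxY, hr, pow_succ]
    field_simp
  · obtain ⟨k, hk⟩ := hx
    have hhit : ∃ k, T^[k] x ∈ Y := ⟨k + 1, by rwa [Function.iterate_succ_apply]⟩
    rw [towerLift, towerLift, iterate_hitTime_apply hxY hhit, ← hitTime_apply_add_one hxY hhit,
      pow_succ]
    field_simp

variable [MeasurableSpace X] {μ : Measure X}

lemma measurable_towerLift [MeasurableSpace 𝕜] [MeasurableMul₂ 𝕜] (hT : Measurable T)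
    (hY : MeasurableSet Y) (hf : Measurable f) : Measurable (towerLift T Y c f) := by
  have hhit := measurable_hitTime hT hY
  have horbit : Measurable fun p : X × ℕ ↦ T^[p.2] p.1 :=
    measurable_from_prod_countable_left fun n ↦ hT.iterate n
  exact ((measurable_from_nat (f := fun n : ℕ ↦ (c ^ n)⁻¹)).comp hhit).mul
    (hf.comp (horbit.comp (measurable_id.prodMk hhit)))

lemma towerLift_ae_eq_restrict (hY : MeasurableSet Y) :
    towerLift T Y c f =ᵐ[μ.restrict Y] f := by
  filter_upwards [ae_restrict_mem hY] with x hx using towerLift_of_mem hx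

lemma towerLift_congr_ae {f' : X → 𝕜} (hT : Measure.QuasiMeasurePreserving T μ μ)
    (hY : MeasurableSet Y) (hhit : ∀ᵐ x ∂μ, ∃ k, T^[k] x ∈ Y) (hff' : f =ᵐ[μ.restrict Y] f') :
    towerLift T Y c f =ᵐ[μ] towerLift T Y c f' := by
  have hY' : ∀ᵐ y ∂μ, y ∈ Y → f y = f' y := (ae_restrict_iff' hY).1 hff'
  have horbit : ∀ᵐ x ∂μ, ∀ n, T^[n] x ∈ Y → f (T^[n] x) = f' (T^[n] x) :=
    ae_all_iff.2 fun n ↦ (hT.iterate n).ae hY'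
  filter_upwards [hhit, horbit] with x hx hxf
  simp only [towerLift, hxf _ (iterate_hitTime_mem hx)]

lemma MeasureTheory.Measure.QuasiMeasurePreserving.ae_towerLift_apply_map
    (hT : Measure.QuasiMeasurePreserving T μ μ) (hY : MeasurableSet Y)
    (hc : c ≠ 0) (hhit : ∀ᵐ x ∂μ, ∃ k, T^[k] x ∈ Y)
    (hf : ∀ᵐ y ∂μ.restrict Y, f (T^[returnTime T Y y] y) = c ^ returnTime T Y y * f y) :
    ∀ᵐ x ∂μ, towerLift T Y c f (T x) = c * towerLift T Y c f x := by
  filter_upwards [hT.ae hhit, (ae_restrict_iff' hY).1 hf] with x hx hfx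
  exact towerLift_apply_map hc hx hfx

end TowerLift

lemma MeasureTheory.Measure.QuasiMeasurePreserving.ae_iterate_eq_pow_mul {X M : Type*}
    [MeasurableSpace X] [Monoid M] {μ : Measure X} {T : X → X} {g : X → M} {c : M}
    (hT : Measure.QuasiMeasurePreserving T μ μ) (hg : ∀ᵐ x ∂μ, g (T x) = c * g x) :
    ∀ᵐ x ∂μ, ∀ n, g (T^[n] x) = c ^ n * g x := by
  refine ae_all_iff.2 fun n ↦ ?_
  induction n with
  | zero => simp
  | succ n ih =>
    filter_upwards [ih, (hT.iterate n).ae hg] with x hx hTx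
    rw [Function.iterate_succ_apply', hTx, hx, pow_succ', mul_assoc]

lemma not_ae_eq_zero_restrict_of_ae_ne_zero {X M : Type*} [MeasurableSpace X] [Zero M]
    {μ : Measure X} {s : Set X} {g : X → M} (hs : μ s ≠ 0) (hg : ∀ᵐ x ∂μ, g x ≠ 0) :
    ¬ g =ᵐ[μ.restrict s] 0 := by
  have := ae_restrict_neBot.2 hs
  intro h
  obtain ⟨x, hx, hx0⟩ := ((ae_restrict_of_ae hg).and h).exists
  exact hx hx0

section Eigenfunction

variable {X 𝕜 : Type*} [MeasurableSpace X] [NormedField 𝕜] {μ : Measure X} {T : X → X}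
  {g : X → 𝕜} {c : 𝕜}

lemma Ergodic.exists_ae_norm_eq_of_ae_comp_eq_mul (hT : Ergodic T μ)
    (hg : AEStronglyMeasurable g μ) (hc : ‖c‖ = 1) (heig : ∀ᵐ x ∂μ, g (T x) = c * g x) :
    ∃ r : ℝ, ∀ᵐ x ∂μ, ‖g x‖ = r := by
  refine hT.ae_eq_const_of_ae_eq_comp_ae hg.norm ?_
  filter_upwards [heig] with x hx
  simp [hx, hc]

lemma Ergodic.memLp_of_ae_comp_eq_mul [IsFiniteMeasure μ] (hT : Ergodic T μ)
    (hg : AEStronglyMeasurable g μ) (hc : ‖c‖ = 1) (heig : ∀ᵐ x ∂μ, g (T x) = c * g x)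
    (p : ℝ≥0∞) : MemLp g p μ := by
  obtain ⟨r, hr⟩ := hT.exists_ae_norm_eq_of_ae_comp_eq_mul hg hc heig
  exact .of_bound hg r (hr.mono fun x hx ↦ hx.le)

lemma Ergodic.ae_ne_zero_of_ae_comp_eq_mul (hT : Ergodic T μ) (hg : AEStronglyMeasurable g μ)
    (hc : ‖c‖ = 1) (heig : ∀ᵐ x ∂μ, g (T x) = c * g x) (hg0 : ¬ g =ᵐ[μ] 0) :
    ∀ᵐ x ∂μ, g x ≠ 0 := by
  obtain ⟨r, hr⟩ := hT.exists_ae_norm_eq_of_ae_comp_eq_mul hg hc heig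
  have hr0 : r ≠ 0 := by
    rintro rfl
    exact hg0 (hr.mono fun x hx ↦ norm_eq_zero.1 hx)
  filter_upwards [hr] with x hx hx0
  rw [hx0, norm_zero] at hx
  exact hr0 hx.symm

end Eigenfunction

section ErgodicTowerLift

variable {X 𝕜 : Type*} [MeasurableSpace X] [NormedField 𝕜] {μ : Measure X} [IsFiniteMeasure μ]
  {T : X → X} {Y : Set X} {c : 𝕜} {f : X → 𝕜}

lemma Ergodic.ae_towerLift_apply_map (hT : Ergodic T μ) (hY : MeasurableSet Y) (hY0 : μ Y ≠ 0)
    (hc : c ≠ 0)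
    (hf : ∀ᵐ y ∂μ.restrict Y, f (T^[returnTime T Y y] y) = c ^ returnTime T Y y * f y) :
    ∀ᵐ x ∂μ, towerLift T Y c f (T x) = c * towerLift T Y c f x :=
  hT.quasiMeasurePreserving.ae_towerLift_apply_map hY hc (hT.ae_exists_iterate_mem hY hY0) hf

lemma Ergodic.memLp_towerLift [MeasurableSpace 𝕜] [BorelSpace 𝕜] [SecondCountableTopology 𝕜]
    (hT : Ergodic T μ) (hY : MeasurableSet Y) (hY0 : μ Y ≠ 0) (hc : ‖c‖ = 1)
    (hfm : AEStronglyMeasurable f (μ.restrict Y))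
    (hf : ∀ᵐ y ∂μ.restrict Y, f (T^[returnTime T Y y] y) = c ^ returnTime T Y y * f y)
    (p : ℝ≥0∞) : MemLp (towerLift T Y c f) p μ := by
  have hc0 : c ≠ 0 := norm_ne_zero_iff.1 (hc ▸ one_ne_zero)
  have hm : AEStronglyMeasurable (towerLift T Y c f) μ :=
    (measurable_towerLift hT.measurable hY hfm.stronglyMeasurable_mk.measurable)
      |>.aestronglyMeasurable.congr (towerLift_congr_ae hT.quasiMeasurePreserving hY
        (hT.ae_exists_iterate_mem hY hY0) hfm.ae_eq_mk).symm
  exact hT.memLp_of_ae_comp_eq_mul hm hc (hT.ae_towerLift_apply_map hY hY0 hc0 hf) p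

end ErgodicTowerLift

theorem stmt2_general {X : Type*} [MeasurableSpace X] (μ : Measure X) [IsProbabilityMeasure μ]
    (T : X → X) (hErg : Ergodic T μ)
    (Y : Set X) (hY : MeasurableSet Y) (hYpos : 0 < μ Y)
    (τ : X → ℕ) (hτ : ∀ y ∈ Y, τ y = sInf {n : ℕ | 1 ≤ n ∧ T^[n] y ∈ Y})
    (μY : Measure X) (hμY : μY = (μ Y)⁻¹ • μ.restrict Y) :
    (∀ (f : X → ℂ) (t : ℝ), 0 ≤ t → t < 2 * Real.pi →
      MemLp f 2 μY → ¬ f =ᵐ[μY] 0 →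
      (∀ᵐ y ∂μY, f (T^[τ y] y) = Complex.exp ((t : ℂ) * (τ y : ℂ) * Complex.I) * f y) →
      t = 0 ∧ ∃ c : ℂ, f =ᵐ[μY] fun _ => c) ↔
    (∀ (g : X → ℂ) (t : ℝ), 0 ≤ t → t < 2 * Real.pi →
      MemLp g 2 μ → ¬ g =ᵐ[μ] 0 →
      (∀ᵐ x ∂μ, g (T x) = Complex.exp ((t : ℂ) * Complex.I) * g x) →
      t = 0 ∧ ∃ c : ℂ, g =ᵐ[μ] fun _ => c) := by
  have hY0 : μ Y ≠ 0 := hYpos.ne'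
  have hae : ae μY = ae (μ.restrict Y) := by
    rw [hμY, Measure.ae_ennreal_smul_measure_eq (ENNReal.inv_ne_zero.2 (measure_ne_top μ Y))]
  have hexp (t : ℝ) (n : ℕ) :
      Complex.exp (t * n * Complex.I) = Complex.exp (t * Complex.I) ^ n := by
    rw [← Complex.exp_nat_mul]
    ring_nf
  simp only [hae, hexp]
  constructor
  · intro hAp g t ht0 ht2 hg hg0 heig
    have hc := Complex.norm_exp_ofReal_mul_I t
    have hgY : MemLp g 2 μY := hμY ▸
      (hg.mono_measure Measure.restrict_le_self).smul_measure (ENNReal.inv_ne_top.2 hY0)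
    obtain ⟨rfl, -⟩ := hAp g t ht0 ht2 hgY
      (not_ae_eq_zero_restrict_of_ae_ne_zero hY0
        (hErg.ae_ne_zero_of_ae_comp_eq_mul hg.1 hc heig hg0))
      (ae_restrict_of_ae ((hErg.quasiMeasurePreserving.ae_iterate_eq_pow_mul heig).mono
        fun y hy ↦ hy (τ y)))
    refine ⟨rfl, hErg.ae_eq_const_of_ae_eq_comp_ae hg.1 ?_⟩
    filter_upwards [heig] with x hx
    simpa using hx
  · intro hWM f t ht0 ht2 hf hf0 heig
    have hc := Complex.norm_exp_ofReal_mul_I t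
    have hfY : AEStronglyMeasurable f (μ.restrict Y) :=
      hf.1.mono_ac (Measure.ae_le_iff_absolutelyContinuous.1 hae.ge)
    have heigY : ∀ᵐ y ∂μ.restrict Y, f (T^[returnTime T Y y] y) =
        Complex.exp (t * Complex.I) ^ returnTime T Y y * f y := by
      filter_upwards [heig, ae_restrict_mem hY] with y hy hyY
      rwa [hτ y hyY] at hy
    have hGf : towerLift T Y (Complex.exp (t * Complex.I)) f =ᵐ[μ.restrict Y] f :=
      towerLift_ae_eq_restrict hY
    obtain ⟨rfl, a, ha⟩ := hWM _ t ht0 ht2 (hErg.memLp_towerLift hY hY0 hc hfY heigY 2)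
      (fun h ↦ hf0 (hGf.symm.trans (ae_restrict_of_ae h)))
      (hErg.ae_towerLift_apply_map hY hY0 (Complex.exp_ne_zero _) heigY)
    exact ⟨rfl, a, hGf.symm.trans (ae_restrict_of_ae ha)⟩

/-- The first return time to a positive measure set is aperiodic if and only if the
system is weakly mixing. -/
theorem stmt2 {X : Type*} [MeasurableSpace X] (μ : Measure X) [IsProbabilityMeasure μ]
    (T : X → X) (hT : MeasurePreserving T μ μ) (hErg : Ergodic T μ)
    (Y : Set X) (hY : MeasurableSet Y) (hYpos : 0 < μ Y)
    (τ : X → ℕ) (hτ : ∀ y ∈ Y, τ y = sInf {n : ℕ | 1 ≤ n ∧ T^[n] y ∈ Y})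
    (μY : Measure X) (hμY : μY = (μ Y)⁻¹ • μ.restrict Y) :
    (∀ (f : X → ℂ) (t : ℝ), 0 ≤ t → t < 2 * Real.pi →
      MemLp f 2 μY → ¬ f =ᵐ[μY] 0 →
      (∀ᵐ y ∂μY, f (T^[τ y] y) = Complex.exp ((t : ℂ) * (τ y : ℂ) * Complex.I) * f y) →
      t = 0 ∧ ∃ c : ℂ, f =ᵐ[μY] fun _ => c) ↔
    (∀ (g : X → ℂ) (t : ℝ), 0 ≤ t → t < 2 * Real.pi →
      MemLp g 2 μ → ¬ g =ᵐ[μ] 0 →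
      (∀ᵐ x ∂μ, g (T x) = Complex.exp ((t : ℂ) * Complex.I) * g x) →
      t = 0 ∧ ∃ c : ℂ, g =ᵐ[μ] fun _ => c) :=
  stmt2_general μ T hErg Y hY hYpos τ hτ μY hμY
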